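/- Fix an integer k ≥ 1 and an ordinal α. (i) If T, T' ∈ k-Tr(α) and T' ≻₁ T, then h_k(T', α) < h_k(T, α). (ii) For every T ∈ k-Tr(α), h_k(T, α) = sup{ h_k(T', α) + 1 : T' ∈ k-Tr(α), T' ≻₁ T }; i.e. h_k(T, α) is exactly the ordinal rank of T in k-Tr(α) with respect to the one-step extension relation ≻₁. -/

import Mathlib

/-- Natural (Hessenberg) sum of two ordinals, as defined in the older Mathlib:
`a ♯ b = max (blsub a fun a' _ => a' ♯ b) (blsub b fun b' _ => a ♯ b')`. -/
noncomputable def Ordinal.nadd (a b : Ordinal.{u}) : Ordinal.{u} :=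
  max (⨆ a' : Set.Iio a, Order.succ (Ordinal.nadd a'.1 b))
    (⨆ b' : Set.Iio b, Order.succ (Ordinal.nadd a b'.1))
termination_by (a, b)
decreasing_by
  · exact Prod.Lex.left _ _ a'.2
  · exact Prod.Lex.right _ b'.2

/-- `nmulNat γ k` is the `k`-fold natural (Hessenberg) sum `γ ⊕ ⋯ ⊕ γ`. -/
noncomputable def nmulNat (γ : Ordinal) : ℕ → Ordinal
  | 0 => 0
  | n + 1 => Ordinal.nadd (nmulNat γ n) γ

/-- `hNil k α = sup { hNil k β * k + 1 : β < α }`, where `* k` is the `k`-fold natural sum. -/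
noncomputable def hNil (k : ℕ) (α : Ordinal) : Ordinal :=
  ⨆ β : Set.Iio α, nmulNat (hNil k β.1) k + 1
termination_by α
decreasing_by exact β.2
/-- Finite `k`-branching trees with ordinal labels: every node has `k` ordered child
positions, each vacant (`nil`) or occupied by a child node. -/
inductive KTree (k : ℕ) : Type 1 where
  | nil : KTree k
  | node : Ordinal → (Fin k → KTree k) → KTree k

/-- `T.Valid α` : every label is `< α` and every child's label is strictly smaller than
its parent's label; i.e. `T ∈ k-Tr(α)`. -/
def KTree.Valid {k : ℕ} : KTree k → Ordinal → Prop
  | .nil, _ => True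
  | .node β ts, α => β < α ∧ ∀ i, (ts i).Valid β

/-- One-step extension `T' ≻₁ T`: `T'` is obtained from `T` by adding exactly one node
(at a vacant child position, or as the root when `T` is empty). -/
inductive KTree.Ext1 {k : ℕ} : KTree k → KTree k → Prop
  | root (β : Ordinal) : Ext1 (.node β fun _ => .nil) .nil
  | child {β : Ordinal} {ts' ts : Fin k → KTree k} (i : Fin k) :
      Ext1 (ts' i) (ts i) → (∀ j, j ≠ i → ts' j = ts j) → Ext1 (.node β ts') (.node β ts)

/-- Natural (Hessenberg) sum of a finite family of ordinals. -/
noncomputable def natSumFin {k : ℕ} (f : Fin k → Ordinal) : Ordinal :=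
  List.foldr Ordinal.nadd 0 (List.ofFn f)

/-- `hAux T α`: for nonempty `T` this is the natural sum, over all vacant child positions
of `T`, of `hNil k β` where `β` is the label of the node owning that vacant position;
`hAux nil α = hNil k α`.  This is the function `h_k(·, α)`. -/
noncomputable def hAux {k : ℕ} : KTree k → Ordinal → Ordinal
  | .nil, α => hNil k α
  | .node β ts, _ => natSumFin fun i => hAux (ts i) β

/-!
Both parts rest on two properties of the natural sum `♯`: it is strictly monotone in each
argument, and every ordinal below `a ♯ b` is at most `a' ♯ b` or `a ♯ b'` for some `a' < a` or
`b' < b`. Adding a node to `T` lowers exactly one summand of `h_k(T, α)`: the value `hNil k β` of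
the vacant slot it fills becomes `hNil k β' * k < hNil k β`, where `β' < β` is the new label.
(For `T = Nil` the single summand is `hNil k α`.)
Conversely, every `o < h_k(T, α)` is bounded by the sum with one summand lowered, and by
induction on `T` such a lowering is realised by a one-step extension of the corresponding
subtree; so `h_k(T, α)` is the least strict upper bound of the values at one-step extensions.
-/

universe u v

local infixl:65 " ♯ " => Ordinal.nadd

namespace Ordinal

theorem nadd_eq_max (a b : Ordinal.{u}) :
    a ♯ b = max (⨆ a' : Set.Iio a, Order.succ (a'.1 ♯ b))
      (⨆ b' : Set.Iio b, Order.succ (a ♯ b'.1)) := by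
  rw [nadd]

theorem nadd_lt_nadd_right {a b : Ordinal.{u}} (h : a < b) (c : Ordinal.{u}) : a ♯ c < b ♯ c := by
  rw [nadd_eq_max b c]
  exact Order.succ_le_iff.1 <|
    (Ordinal.le_iSup (fun x : Set.Iio b => Order.succ (x.1 ♯ c)) ⟨a, h⟩).trans (le_max_left _ _)

theorem nadd_lt_nadd_left {b c : Ordinal.{u}} (h : b < c) (a : Ordinal.{u}) : a ♯ b < a ♯ c := by
  rw [nadd_eq_max a c]
  exact Order.succ_le_iff.1 <|
    (Ordinal.le_iSup (fun x : Set.Iio c => Order.succ (a ♯ x.1)) ⟨b, h⟩).trans (le_max_right _ _)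

theorem nadd_le_nadd_right {a b : Ordinal.{u}} (h : a ≤ b) (c : Ordinal.{u}) : a ♯ c ≤ b ♯ c :=
  h.eq_or_lt.elim (fun h => h ▸ le_rfl) fun h => (nadd_lt_nadd_right h c).le

theorem nadd_le_nadd_left {b c : Ordinal.{u}} (h : b ≤ c) (a : Ordinal.{u}) : a ♯ b ≤ a ♯ c :=
  h.eq_or_lt.elim (fun h => h ▸ le_rfl) fun h => (nadd_lt_nadd_left h a).le

theorem lt_nadd_iff {a b x : Ordinal.{u}} :
    x < a ♯ b ↔ (∃ a' < a, x ≤ a' ♯ b) ∨ ∃ b' < b, x ≤ a ♯ b' := by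
  constructor
  · rw [nadd_eq_max, lt_max_iff, Ordinal.lt_iSup_iff, Ordinal.lt_iSup_iff]
    rintro (⟨a', ha'⟩ | ⟨b', hb'⟩)
    · exact Or.inl ⟨a'.1, a'.2, Order.lt_succ_iff.1 ha'⟩
    · exact Or.inr ⟨b'.1, b'.2, Order.lt_succ_iff.1 hb'⟩
  · rintro (⟨a', ha', hle⟩ | ⟨b', hb', hle⟩)
    · exact hle.trans_lt (nadd_lt_nadd_right ha' b)
    · exact hle.trans_lt (nadd_lt_nadd_left hb' a)

theorem nadd_comm (a b : Ordinal.{u}) : a ♯ b = b ♯ a := by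
  rw [nadd_eq_max a b, nadd_eq_max b a, max_comm]
  congr 2 <;> funext x <;> rw [nadd_comm]
termination_by (a, b)
decreasing_by
  · exact Prod.Lex.right _ x.2
  · exact Prod.Lex.left _ _ x.2

end Ordinal

open Ordinal Function

section NatSumFin

variable {k : ℕ}

theorem natSumFin_cons (a : Ordinal.{u}) (f : Fin k → Ordinal.{u}) :
    natSumFin (Fin.cons a f : Fin (k + 1) → Ordinal) = a ♯ natSumFin f := by
  simp only [natSumFin, List.ofFn_succ, Fin.cons_zero, Fin.cons_succ, List.foldr_cons]

theorem natSumFin_const (c : Ordinal.{u}) (n : ℕ) :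
    natSumFin (fun _ : Fin n => c) = nmulNat c n := by
  induction n with
  | zero => simp [natSumFin, nmulNat]
  | succ n ih => rw [← Fin.cons_self_tail fun _ => c, natSumFin_cons, Fin.tail_def, ih,
      nmulNat, nadd_comm]

theorem natSumFin_monotone : Monotone (natSumFin : (Fin k → Ordinal.{u}) → Ordinal.{u}) := by
  induction k with
  | zero => intro f g _; simp [natSumFin]
  | succ k ih =>
    intro f g h
    rw [← Fin.cons_self_tail f, ← Fin.cons_self_tail g, natSumFin_cons, natSumFin_cons]
    exact (nadd_le_nadd_right (h 0) _).trans (nadd_le_nadd_left (ih fun i => h i.succ) _)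

theorem natSumFin_lt_natSumFin {f g : Fin k → Ordinal.{u}} (i : Fin k) (hi : f i < g i)
    (h : ∀ j ≠ i, f j = g j) : natSumFin f < natSumFin g := by
  induction k with
  | zero => exact i.elim0
  | succ k ih =>
    rw [← Fin.cons_self_tail f, ← Fin.cons_self_tail g, natSumFin_cons, natSumFin_cons]
    cases i using Fin.cases with
    | zero =>
      have htail : Fin.tail f = Fin.tail g := funext fun j => h j.succ (Fin.succ_ne_zero j)
      rw [htail]
      exact nadd_lt_nadd_right hi _
    | succ i =>
      rw [h 0 (Fin.succ_ne_zero i).symm]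
      exact nadd_lt_nadd_left (ih i hi fun j hj => h j.succ ((Fin.succ_injective _).ne hj)) _

theorem exists_update_le_of_lt_natSumFin {f : Fin k → Ordinal.{u}} {x : Ordinal.{u}}
    (hx : x < natSumFin f) : ∃ i, ∃ a < f i, x ≤ natSumFin (update f i a) := by
  induction k generalizing x with
  | zero => simp [natSumFin] at hx
  | succ k ih =>
    rw [← Fin.cons_self_tail f] at hx ⊢
    rw [natSumFin_cons] at hx
    rcases lt_nadd_iff.1 hx with ⟨a, ha, hle⟩ | ⟨b, hb, hle⟩
    · refine ⟨0, a, ha, ?_⟩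
      rwa [Fin.update_cons_zero, natSumFin_cons]
    · obtain ⟨i, a, ha, hle'⟩ := ih hb
      refine ⟨i.succ, a, by simpa using ha, ?_⟩
      rw [← Fin.cons_update, natSumFin_cons]
      exact hle.trans (nadd_le_nadd_left hle' _)

end NatSumFin

-- `hNil.{0, v}` takes suprema in `Ordinal.{v}` indexed by `Set.Iio α : Type 1`.
instance small_Iio_ordinal_zero (α : Ordinal.{0}) : Small.{v} (Set.Iio α) :=
  small_lift.{1, v, 0} _

section HNil

variable {k : ℕ}

theorem hNil_eq_iSup (k : ℕ) (α : Ordinal.{0}) :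
    hNil.{0, v} k α = ⨆ β : Set.Iio α, nmulNat (hNil.{0, v} k β.1) k + 1 := by
  rw [hNil]

theorem nmulNat_hNil_lt_hNil {β α : Ordinal.{0}} (h : β < α) :
    nmulNat (hNil.{0, v} k β) k < hNil.{0, v} k α := by
  rw [hNil_eq_iSup k α]
  exact Order.add_one_le_iff.1 <|
    Ordinal.le_iSup (fun b : Set.Iio α => nmulNat (hNil.{0, v} k b.1) k + 1) ⟨β, h⟩

theorem exists_le_nmulNat_hNil_of_lt_hNil {α : Ordinal.{0}} {x : Ordinal.{v}}
    (h : x < hNil.{0, v} k α) : ∃ β < α, x ≤ nmulNat (hNil.{0, v} k β) k := by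
  rw [hNil_eq_iSup k α, Ordinal.lt_iSup_iff] at h
  obtain ⟨⟨β, hβ⟩, hx⟩ := h
  exact ⟨β, hβ, Order.lt_add_one_iff.1 hx⟩

end HNil

namespace KTree

variable {k : ℕ}

theorem hAux_node (β α : Ordinal.{0}) (ts : Fin k → KTree k) :
    hAux.{v} (node β ts) α = natSumFin fun i => hAux.{v} (ts i) β := by
  rw [hAux]

theorem hAux_leaf (β α : Ordinal.{0}) :
    hAux.{v} (node β fun _ => nil : KTree k) α = nmulNat (hNil.{0, v} k β) k := by
  rw [hAux_node, ← natSumFin_const]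
  rfl

theorem hAux_lt_hAux_of_ext1 {T T' : KTree k} (h : T'.Ext1 T) {α : Ordinal.{0}}
    (hT' : T'.Valid α) : hAux.{v} T' α < hAux.{v} T α := by
  induction h generalizing α with
  | root β => exact (hAux_leaf β α).trans_lt (nmulNat_hNil_lt_hNil hT'.1)
  | @child β ts' ts i _ heq ih =>
    rw [hAux_node, hAux_node]
    exact natSumFin_lt_natSumFin i (ih (hT'.2 i)) fun j hj => by rw [heq j hj]

theorem exists_ext1_le_hAux {T : KTree k} {α : Ordinal.{0}} (hT : T.Valid α) {o : Ordinal.{v}}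
    (ho : o < hAux.{v} T α) : ∃ T' : KTree k, T'.Valid α ∧ T'.Ext1 T ∧ o ≤ hAux.{v} T' α := by
  induction T generalizing α o with
  | nil =>
    obtain ⟨β, hβ, hle⟩ := exists_le_nmulNat_hNil_of_lt_hNil ho
    exact ⟨node β fun _ => nil, ⟨hβ, fun _ => trivial⟩, .root β, (hAux_leaf β α).symm ▸ hle⟩
  | node β ts ih =>
    obtain ⟨hβ, hts⟩ := hT
    rw [hAux_node] at ho
    obtain ⟨i, a, ha, hle⟩ := exists_update_le_of_lt_natSumFin ho
    obtain ⟨s, hs, hext, has⟩ := ih i (hts i) ha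
    refine ⟨node β (update ts i s), ⟨hβ, fun j => ?_⟩, .child i ?_ fun j hj => ?_, ?_⟩
    · rcases eq_or_ne j i with rfl | hj
      · simpa using hs
      · simpa [hj] using hts j
    · simpa using hext
    · exact update_of_ne hj _ _
    · rw [hAux_node]
      refine hle.trans (natSumFin_monotone fun j => ?_)
      rcases eq_or_ne j i with rfl | hj
      · simpa using has
      · simp [hj]

end KTree

theorem csSup_eq_of_forall_le_of_forall_lt_exists_gt' {α : Type*}
    [ConditionallyCompleteLinearOrderBot α] {s : Set α} {b : α} (H : ∀ a ∈ s, a ≤ b)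
    (H' : ∀ w < b, ∃ a ∈ s, w < a) : sSup s = b :=
  le_antisymm (csSup_le' H) <| le_of_forall_lt fun w hw =>
    let ⟨_, ha, hwa⟩ := H' w hw
    hwa.trans_le (le_csSup ⟨b, H⟩ ha)

theorem stmt_5_general (k : ℕ) (α : Ordinal) :
    (∀ T T' : KTree k, T.Valid α → T'.Valid α → T'.Ext1 T → hAux T' α < hAux T α) ∧
    (∀ T : KTree k, T.Valid α →
      hAux T α = sSup {o : Ordinal | ∃ T' : KTree k, T'.Valid α ∧ T'.Ext1 T ∧
        o = hAux T' α + 1}) := by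
  refine ⟨fun T T' _ hT' hext => KTree.hAux_lt_hAux_of_ext1 hext hT', fun T hT => ?_⟩
  refine (csSup_eq_of_forall_le_of_forall_lt_exists_gt' ?_ fun o ho => ?_).symm
  · rintro _ ⟨T', hT', hext, rfl⟩
    exact Order.add_one_le_of_lt (KTree.hAux_lt_hAux_of_ext1 hext hT')
  · obtain ⟨T', hT', hext, hle⟩ := KTree.exists_ext1_le_hAux hT ho
    exact ⟨_, ⟨T', hT', hext, rfl⟩, Order.lt_add_one_iff.2 hle⟩

/-- (i) `h_k(·, α)` is strictly decreasing along one-step extensions in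
`k-Tr(α)`; (ii) for every `T ∈ k-Tr(α)`, `h_k(T, α)` is exactly the ordinal rank of `T`,
i.e. `h_k(T, α) = sup { h_k(T', α) + 1 : T' ∈ k-Tr(α), T' ≻₁ T }`. -/
theorem stmt_5 (k : ℕ) (hk : 1 ≤ k) (α : Ordinal) :
    (∀ T T' : KTree k, T.Valid α → T'.Valid α → T'.Ext1 T → hAux T' α < hAux T α) ∧
    (∀ T : KTree k, T.Valid α →
      hAux T α = sSup {o : Ordinal | ∃ T' : KTree k, T'.Valid α ∧ T'.Ext1 T ∧
        o = hAux T' α + 1}) :=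
  stmt_5_general k α
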